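/- Assume f = h + g with h ∈ S_{μ,L}^{1,1}(X) (0 ≤ μ ≤ L < ∞) and g convex on X. Let (λ_k, x_k, y_k, v_k) be generated by the corrected semi-implicit scheme with x₀, v₀ ∈ X: y_k = (x_k + α_k v_k)/(1+α_k); v_{k+1} = argmin_{v ∈ X} { g(v) + ⟨Aᵀλ_{k+1} + ∇h_β(y_k), v⟩ + (τ_k/(2α_k))‖v − w_k‖² } where τ_k = γ_k + μ_β α_k and w_k = (γ_k v_k + μ_β α_k y_k)/τ_k; x_{k+1} = (x_k + α_k v_{k+1})/(1+α_k); λ_{k+1} = λ_k + (α_k/θ_k)(A v_{k+1} − b); and θ_{k+1} = θ_k/(1+α_k), γ_{k+1} = (γ_k + μ_β α_k)/(1+α_k), θ₀ = 1, γ₀ > 0, with step sizes chosen so that L_β α_k² = γ_k. Define E_k = L_β(x_k, λ*) − L_β(x*, λ_k) + (γ_k/2)‖v_k − x*‖² + (θ_k/2)‖λ_k − λ*‖². Then x_k, y_k, v_k ∈ X for all k and E_{k+1} − E_k ≤ −α_k E_{k+1} for all k ∈ ℕ. -/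

import Mathlib

open scoped RealInnerProductSpace Pointwise

/-- The smallest singular value of a linear map between Euclidean spaces. -/
noncomputable def sigmaMin {n m : ℕ}
    (A : EuclideanSpace ℝ (Fin n) →L[ℝ] EuclideanSpace ℝ (Fin m)) : ℝ :=
  sInf {c : ℝ | ∃ x : EuclideanSpace ℝ (Fin n), ‖x‖ = 1 ∧ ‖A x‖ = c}

/-- The convex subdifferential. -/
def subdiff {n : ℕ} (f : EuclideanSpace ℝ (Fin n) → ℝ)
    (x : EuclideanSpace ℝ (Fin n)) : Set (EuclideanSpace ℝ (Fin n)) :=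
  {p | ∀ y, f x + ⟪p, y - x⟫ ≤ f y}

/-- The normal cone of `X` at `x` (empty if `x ∉ X`). -/
def normalCone {n : ℕ} (X : Set (EuclideanSpace ℝ (Fin n)))
    (x : EuclideanSpace ℝ (Fin n)) : Set (EuclideanSpace ℝ (Fin n)) :=
  {p | x ∈ X ∧ ∀ z ∈ X, ⟪p, z - x⟫ ≤ 0}

/-!
With `τ = γ_k + μ_β α_k`, the proof is one step of a Lyapunov argument. The `x`-update is the
convex combination `x_{k+1} = (x_k + α_k v_{k+1}) / (1 + α_k)`, so the descent inequality of `h_β`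
at `y_k`, its strong convexity towards `x_k` and towards `x*`, and the convexity of `g` bound the
primal gap at step `k + 1`. Since `(1 + α_k)(x_{k+1} - y_k) = α_k (v_{k+1} - v_k)`, the rule
`L_β α_k² = γ_k` absorbs the curvature term into `γ_k ‖v_{k+1} - v_k‖² / 2`. The `v`-update
minimises a `τ/α_k`-strongly convex objective, hence grows quadratically away from `v_{k+1}`; the
three-point identity along `τ w_k = γ_k v_k + μ_β α_k y_k` turns that growth into the `v`-part of
the energy, cancelling the curvature term. Finally the dual update converts the coupling
`⟨λ_{k+1}, A v_{k+1} - b⟩` into the decrease of `θ_k ‖λ - λ*‖² / 2`. Summing gives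
`(1 + α_k) E_{k+1} ≤ E_k`.
-/

open Set Topology InnerProductSpace
open ContinuousLinearMap (adjoint adjoint_inner_left)

section InnerProductSpace

variable {E : Type*} [NormedAddCommGroup E] [InnerProductSpace ℝ E]

theorem two_mul_inner_sub_sub (p q w : E) :
    2 * ⟪p - q, q - w⟫ = ‖p - w‖ ^ 2 - ‖p - q‖ ^ 2 - ‖q - w‖ ^ 2 := by
  rw [show p - w = (p - q) + (q - w) by abel, norm_add_sq_real]
  ring

theorem add_mul_three_point {a b : ℝ} {v y w : E} (hw : (a + b) • w = a • v + b • y)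
    (p q : E) :
    (a + b) * (‖p - w‖ ^ 2 - ‖p - q‖ ^ 2 - ‖q - w‖ ^ 2) =
      a * (‖p - v‖ ^ 2 - ‖p - q‖ ^ 2 - ‖q - v‖ ^ 2) +
        b * (‖p - y‖ ^ 2 - ‖p - q‖ ^ 2 - ‖q - y‖ ^ 2) := by
  simp only [← two_mul_inner_sub_sub, inner_sub_right]
  have hw' := congrArg (⟪p - q, ·⟫) hw
  simp only [inner_add_right, real_inner_smul_right] at hw'
  linear_combination (-2) * hw'

theorem StrongConvexOn.add_mul_norm_sub_sq_le {s : Set E} {m : ℝ} {f : E → ℝ}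
    (hf : StrongConvexOn s m f) {x : E} (hx : x ∈ s) (hmin : IsMinOn f s x) {y : E}
    (hy : y ∈ s) : f x + m / 2 * ‖y - x‖ ^ 2 ≤ f y := by
  -- compare `f x` with `f` at `(1 - t) • x + t • y` and let `t → 0⁺`
  have hseg : ∀ t ∈ Ioc (0 : ℝ) 1, f x + (1 - t) * (m / 2 * ‖y - x‖ ^ 2) ≤ f y := by
    rintro t ⟨ht0, ht1⟩
    have hconv := hf.2 hx hy (sub_nonneg.2 ht1) ht0.le (sub_add_cancel 1 t)
    have hmin_t := isMinOn_iff.1 hmin _ (hf.1 hx hy (sub_nonneg.2 ht1) ht0.le (sub_add_cancel 1 t))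
    simp only [smul_eq_mul, norm_sub_rev x y] at hconv hmin_t
    nlinarith
  refine le_of_tendsto (f := fun t : ℝ => f x + (1 - t) * (m / 2 * ‖y - x‖ ^ 2))
    (x := 𝓝[>] 0) ?_ ?_
  · have : Continuous fun t : ℝ => f x + (1 - t) * (m / 2 * ‖y - x‖ ^ 2) := by fun_prop
    simpa using (this.tendsto 0).mono_left nhdsWithin_le_nhds
  · filter_upwards [Ioc_mem_nhdsGT zero_lt_one] with t ht using hseg t ht

theorem ConvexOn.strongConvexOn_add_mul_norm_sub_sq {s : Set E} {g : E → ℝ}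
    (hg : ConvexOn ℝ s g) (κ : ℝ) (w : E) :
    StrongConvexOn s (2 * κ) fun u => g u + κ * ‖u - w‖ ^ 2 := by
  -- `g u + κ ‖u - w‖² - κ ‖u‖²` is `g` plus an affine function of `u`.
  rw [strongConvexOn_iff_convex]
  refine ((hg.add ((innerSL ℝ (-(2 * κ) • w)).toLinearMap.convexOn hg.1)).add_const
    (κ * ‖w‖ ^ 2)).congr fun u _ => ?_
  simp only [Pi.add_apply, ContinuousLinearMap.coe_coe, innerSL_apply_apply, real_inner_smul_left,
    norm_sub_sq_real, real_inner_comm w u]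
  ring

theorem eq_smul_add_smul_of_one_add_smul_eq {x v z : E} {α : ℝ} (hα : 0 ≤ α)
    (hz : (1 + α) • z = x + α • v) : z = (1 + α)⁻¹ • x + (α / (1 + α)) • v := by
  rw [div_eq_inv_mul, ← smul_smul, ← smul_add, ← hz, inv_smul_smul₀ (by positivity)]

theorem inv_one_add_add_div_one_add {α : ℝ} (hα : 0 ≤ α) : (1 + α)⁻¹ + α / (1 + α) = 1 := by
  field_simp

theorem ConvexOn.one_add_mul_le {s : Set E} {g : E → ℝ} (hg : ConvexOn ℝ s g) {x v z : E}
    (hx : x ∈ s) (hv : v ∈ s) {α : ℝ} (hα : 0 ≤ α) (hz : (1 + α) • z = x + α • v) :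
    (1 + α) * g z ≤ g x + α * g v := by
  have hconv := hg.2 hx hv (by positivity) (by positivity) (inv_one_add_add_div_one_add hα)
  rw [← eq_smul_add_smul_of_one_add_smul_eq hα hz, smul_eq_mul, smul_eq_mul] at hconv
  calc (1 + α) * g z ≤ (1 + α) * ((1 + α)⁻¹ * g x + α / (1 + α) * g v) := by gcongr
    _ = g x + α * g v := by field_simp

theorem Convex.mem_of_one_add_smul_eq {s : Set E} (hs : Convex ℝ s) {x v z : E}
    (hx : x ∈ s) (hv : v ∈ s) {α : ℝ} (hα : 0 ≤ α) (hz : (1 + α) • z = x + α • v) :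
    z ∈ s :=
  eq_smul_add_smul_of_one_add_smul_eq hα hz ▸
    hs hx hv (by positivity) (by positivity) (inv_one_add_add_div_one_add hα)

theorem Convex.iterates_mem {X : Set E} (hX : Convex ℝ X) {α : ℕ → ℝ} (hα : ∀ k, 0 ≤ α k)
    {x y v : ℕ → E} (hx0 : x 0 ∈ X) (hv0 : v 0 ∈ X) (hv : ∀ k, v (k + 1) ∈ X)
    (hy : ∀ k, (1 + α k) • y k = x k + α k • v k)
    (hx : ∀ k, (1 + α k) • x (k + 1) = x k + α k • v (k + 1)) :
    ∀ k, x k ∈ X ∧ y k ∈ X ∧ v k ∈ X := by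
  have hxv : ∀ k, x k ∈ X ∧ v k ∈ X := fun k => by
    induction k with
    | zero => exact ⟨hx0, hv0⟩
    | succ k ih => exact ⟨hX.mem_of_one_add_smul_eq ih.1 (hv k) (hα k) (hx k), hv k⟩
  exact fun k => ⟨(hxv k).1, hX.mem_of_one_add_smul_eq (hxv k).1 (hxv k).2 (hα k) (hy k), (hxv k).2⟩

end InnerProductSpace

section Descent

theorem le_add_deriv_add_half_of_deriv_le {φ φ' : ℝ → ℝ} {C : ℝ}
    (hφ : ∀ t ∈ Icc (0 : ℝ) 1, HasDerivAt φ (φ' t) t)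
    (hφ' : ∀ t ∈ Ico (0 : ℝ) 1, φ' t ≤ φ' 0 + C * t) :
    φ 1 ≤ φ 0 + φ' 0 + C / 2 := by
  have hB : ∀ t, HasDerivAt (fun t => φ 0 + φ' 0 * t + C / 2 * t ^ 2) (φ' 0 + C * t) t := by
    intro t
    refine ((((hasDerivAt_id t).const_mul (φ' 0)).const_add (φ 0)).add
      ((hasDerivAt_pow 2 t).const_mul (C / 2))).congr_deriv ?_
    norm_num
    ring
  have := image_le_of_deriv_right_le_deriv_boundary
    (fun t ht => (hφ t ht).continuousAt.continuousWithinAt)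
    (fun t ht => (hφ t (Ico_subset_Icc_self ht)).hasDerivWithinAt) (by simp)
    (fun t _ => (hB t).continuousAt.continuousWithinAt) (fun t _ => (hB t).hasDerivWithinAt)
    hφ' (right_mem_Icc.2 zero_le_one)
  linarith

variable {E : Type*} [NormedAddCommGroup E] [InnerProductSpace ℝ E] [CompleteSpace E]

theorem Convex.le_add_inner_add_of_inner_gradient_sub_le {X : Set E} (hX : Convex ℝ X)
    {h : E → ℝ} {gradh : E → E} {L : ℝ} (hgrad : ∀ z ∈ X, HasGradientAt h (gradh z) z)
    (hlip : ∀ u ∈ X, ∀ w ∈ X, ⟪gradh u - gradh w, u - w⟫ ≤ L * ‖u - w‖ ^ 2)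
    {u w : E} (hu : u ∈ X) (hw : w ∈ X) :
    h w ≤ h u + ⟪gradh u, w - u⟫ + L / 2 * ‖w - u‖ ^ 2 := by
  set d := w - u
  have hseg : ∀ t ∈ Icc (0 : ℝ) 1, u + t • d ∈ X := fun t ht => hX.add_smul_sub_mem hu hw ht
  have hderiv : ∀ t ∈ Icc (0 : ℝ) 1,
      HasDerivAt (fun s : ℝ => h (u + s • d)) ⟪gradh (u + t • d), d⟫ t := by
    intro t ht
    have hline : HasDerivAt (fun s : ℝ => u + s • d) d t := by
      simpa using ((hasDerivAt_id t).smul_const d).const_add u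
    simpa [toDual_apply_apply, Function.comp_def] using
      (hgrad _ (hseg t ht)).hasFDerivAt.comp_hasDerivAt t hline
  have hmono : ∀ t ∈ Ico (0 : ℝ) 1,
      ⟪gradh (u + t • d), d⟫ ≤ ⟪gradh (u + (0 : ℝ) • d), d⟫ + L * ‖d‖ ^ 2 * t := by
    rintro t ⟨ht0, ht1⟩
    rcases ht0.eq_or_lt with rfl | htpos
    · simp
    have hl := hlip _ (hseg t ⟨ht0, ht1.le⟩) u hu
    rw [add_sub_cancel_left, inner_sub_left, real_inner_smul_right, real_inner_smul_right,
      norm_smul, Real.norm_of_nonneg ht0] at hl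
    simp only [zero_smul, add_zero]
    nlinarith
  have := le_add_deriv_add_half_of_deriv_le hderiv hmono
  simp only [zero_smul, add_zero, one_smul, d, add_sub_cancel] at this
  linarith

end Descent

section Penalty

variable {E F : Type*} [NormedAddCommGroup E] [InnerProductSpace ℝ E] [CompleteSpace E]
  [NormedAddCommGroup F] [InnerProductSpace ℝ F] [CompleteSpace F]

theorem norm_apply_sub_sq_eq (A : E →L[ℝ] F) (b : F) (u w : E) :
    ‖A w - b‖ ^ 2 = ‖A u - b‖ ^ 2 + 2 * ⟪adjoint A (A u - b), w - u⟫ + ‖A (w - u)‖ ^ 2 := by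
  rw [show A w - b = (A u - b) + A (w - u) by rw [map_sub]; abel, norm_add_sq_real,
    adjoint_inner_left]

theorem lower_bound_add_penalty (A : E →L[ℝ] F) (b : F) {σ β μ : ℝ} (hσ : 0 ≤ σ)
    (hA : ∀ z, σ * ‖z‖ ≤ ‖A z‖) (hβ : 0 ≤ β) {h : E → ℝ} {p u w : E}
    (hlower : h u + ⟪p, w - u⟫ + μ / 2 * ‖w - u‖ ^ 2 ≤ h w) :
    h u + β / 2 * ‖A u - b‖ ^ 2 + ⟪p + β • adjoint A (A u - b), w - u⟫
      + (μ + β * σ ^ 2) / 2 * ‖w - u‖ ^ 2 ≤ h w + β / 2 * ‖A w - b‖ ^ 2 := by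
  have hσA : σ ^ 2 * ‖w - u‖ ^ 2 ≤ ‖A (w - u)‖ ^ 2 := by
    rw [← mul_pow]; gcongr; exact hA _
  rw [norm_apply_sub_sq_eq A b u w, inner_add_left, real_inner_smul_left]
  nlinarith [mul_le_mul_of_nonneg_left hσA hβ]

theorem upper_bound_add_penalty (A : E →L[ℝ] F) (b : F) {β L : ℝ} (hβ : 0 ≤ β)
    {h : E → ℝ} {p u w : E} (hupper : h w ≤ h u + ⟪p, w - u⟫ + L / 2 * ‖w - u‖ ^ 2) :
    h w + β / 2 * ‖A w - b‖ ^ 2 ≤ h u + β / 2 * ‖A u - b‖ ^ 2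
      + ⟪p + β • adjoint A (A u - b), w - u⟫ + (L + β * ‖A‖ ^ 2) / 2 * ‖w - u‖ ^ 2 := by
  have hAop : ‖A (w - u)‖ ^ 2 ≤ ‖A‖ ^ 2 * ‖w - u‖ ^ 2 := by
    rw [← mul_pow]; gcongr; exact A.le_opNorm _
  rw [norm_apply_sub_sq_eq A b u w, inner_add_left, real_inner_smul_left]
  nlinarith [mul_le_mul_of_nonneg_left hAop hβ]

end Penalty

theorem sigmaMin_nonneg {n m : ℕ}
    (A : EuclideanSpace ℝ (Fin n) →L[ℝ] EuclideanSpace ℝ (Fin m)) :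
    0 ≤ sigmaMin A :=
  Real.sInf_nonneg (by rintro c ⟨x, -, rfl⟩; positivity)

theorem sigmaMin_mul_norm_le {n m : ℕ}
    (A : EuclideanSpace ℝ (Fin n) →L[ℝ] EuclideanSpace ℝ (Fin m)) (z : EuclideanSpace ℝ (Fin n)) :
    sigmaMin A * ‖z‖ ≤ ‖A z‖ := by
  rcases eq_or_ne z 0 with rfl | hz
  · simp
  have hz' : 0 < ‖z‖ := norm_pos_iff.2 hz
  have hunit : ‖‖z‖⁻¹ • z‖ = 1 := by rw [norm_smul, norm_inv, norm_norm, inv_mul_cancel₀ hz'.ne']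
  have hle : sigmaMin A ≤ ‖A (‖z‖⁻¹ • z)‖ :=
    csInf_le ⟨0, by rintro c ⟨x, -, rfl⟩; positivity⟩ ⟨_, hunit, rfl⟩
  rw [map_smul, norm_smul, norm_inv, norm_norm] at hle
  rwa [le_inv_mul_iff₀ hz', mul_comm] at hle

section OneStep

variable {E F : Type*} [NormedAddCommGroup E] [InnerProductSpace ℝ E]
  [NormedAddCommGroup F] [InnerProductSpace ℝ F]

theorem primal_step {X : Set E} {φ g : E → ℝ} {dφ : E → E} {μ L α γ : ℝ}
    (hlower : ∀ u ∈ X, ∀ w ∈ X, φ u + ⟪dφ u, w - u⟫ + μ / 2 * ‖w - u‖ ^ 2 ≤ φ w)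
    (hupper : ∀ u ∈ X, ∀ w ∈ X, φ w ≤ φ u + ⟪dφ u, w - u⟫ + L / 2 * ‖w - u‖ ^ 2)
    (hg : ConvexOn ℝ X g) (hμ : 0 ≤ μ) (hα : 0 < α) (hγ : 0 ≤ γ) (hstep : L * α ^ 2 ≤ γ)
    {x y v x' v' xs : E} (hx : x ∈ X) (hy : y ∈ X) (hx' : x' ∈ X) (hv' : v' ∈ X)
    (hxs : xs ∈ X) (hyv : (1 + α) • y = x + α • v) (hx'v' : (1 + α) • x' = x + α • v') :
    (1 + α) * (φ x' + g x') ≤ φ x + g x + α * (φ xs + g v' + ⟪dφ y, v' - xs⟫)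
      - α * μ / 2 * ‖xs - y‖ ^ 2 + γ / 2 * ‖v' - v‖ ^ 2 := by
  have h1α : 0 < 1 + α := by linarith
  have hgap : (1 + α) * ‖x' - y‖ = α * ‖v' - v‖ := by
    have := congrArg norm (show (1 + α) • (x' - y) = α • (v' - v) by
      rw [smul_sub, hx'v', hyv]; module)
    rwa [norm_smul, norm_smul, Real.norm_of_nonneg h1α.le, Real.norm_of_nonneg hα.le] at this
  have hquad : (1 + α) * (L / 2 * ‖x' - y‖ ^ 2) ≤ γ / 2 * ‖v' - v‖ ^ 2 := by
    refine le_of_mul_le_mul_left ?_ h1α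
    have hsq : (1 + α) ^ 2 * ‖x' - y‖ ^ 2 = α ^ 2 * ‖v' - v‖ ^ 2 := by
      rw [← mul_pow, hgap, mul_pow]
    calc (1 + α) * ((1 + α) * (L / 2 * ‖x' - y‖ ^ 2)) = L / 2 * (α ^ 2 * ‖v' - v‖ ^ 2) := by
          rw [← hsq]; ring
      _ ≤ γ / 2 * ‖v' - v‖ ^ 2 := by nlinarith [sq_nonneg ‖v' - v‖]
      _ ≤ (1 + α) * (γ / 2 * ‖v' - v‖ ^ 2) := by
          nlinarith [mul_nonneg hα.le (mul_nonneg hγ (sq_nonneg ‖v' - v‖))]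
  have hinner : (1 + α) * ⟪dφ y, x' - y⟫ = ⟪dφ y, x - y⟫ + α * ⟪dφ y, v' - xs⟫
      + α * ⟪dφ y, xs - y⟫ := by
    have := congrArg (⟪dφ y, ·⟫) (show (1 + α) • (x' - y)
        = (x - y) + α • (v' - xs) + α • (xs - y) by rw [smul_sub, hx'v']; module)
    simpa only [inner_add_right, real_inner_smul_right] using this
  have hdescent := mul_le_mul_of_nonneg_left (hupper y hy x' hx') h1α.le
  have hlower_x := hlower y hy x hx
  have hlower_xs := mul_le_mul_of_nonneg_left (hlower y hy xs hxs) hα.le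
  have hgx' := hg.one_add_mul_le hx hv' hα.le hx'v'
  nlinarith [mul_nonneg hμ (sq_nonneg ‖x - y‖)]

theorem prox_step {X : Set E} {g : E → ℝ} (hg : ConvexOn ℝ X g) {μ α γ : ℝ} (hμ : 0 ≤ μ)
    (hα : 0 < α) {c v y w v' xs : E} (hw : (γ + μ * α) • w = γ • v + (μ * α) • y)
    (hv' : v' ∈ X)
    (hmin : ∀ u ∈ X, g v' + ⟪c, v'⟫ + (γ + μ * α) / (2 * α) * ‖v' - w‖ ^ 2 ≤
      g u + ⟪c, u⟫ + (γ + μ * α) / (2 * α) * ‖u - w‖ ^ 2)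
    (hxs : xs ∈ X) :
    α * (g v' + ⟪c, v' - xs⟫) + (γ + μ * α) / 2 * ‖v' - xs‖ ^ 2 + γ / 2 * ‖v' - v‖ ^ 2 ≤
      α * g xs + γ / 2 * ‖v - xs‖ ^ 2 + μ * α / 2 * ‖xs - y‖ ^ 2 := by
  have hψ : ConvexOn ℝ X fun u => g u + ⟪c, u⟫ :=
    hg.add ((innerSL ℝ c).toLinearMap.convexOn hg.1)
  have hgrowth := (hψ.strongConvexOn_add_mul_norm_sub_sq ((γ + μ * α) / (2 * α)) w)
    |>.add_mul_norm_sub_sq_le hv' (fun u hu => hmin u hu) hxs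
  have h3 := add_mul_three_point hw xs v'
  have hgrowth' := mul_le_mul_of_nonneg_left hgrowth (by positivity : (0 : ℝ) ≤ 2 * α)
  field_simp at hgrowth'
  rw [norm_sub_rev xs v'] at hgrowth' h3
  rw [norm_sub_rev xs v] at h3
  rw [inner_sub_right]
  nlinarith [mul_nonneg (mul_nonneg hμ hα.le) (sq_nonneg ‖v' - y‖)]

theorem dual_step {θ α : ℝ} (hθ : 0 < θ) {l l' r ls : F} (hl' : l' = l + (α / θ) • r) :
    θ / 2 * ‖l' - ls‖ ^ 2 ≤ θ / 2 * ‖l - ls‖ ^ 2 + α * ⟪l' - ls, r⟫ := by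
  have hl : l - ls = (l' - ls) - (α / θ) • r := by rw [hl']; abel
  rw [hl, norm_sub_sq_real (l' - ls), real_inner_smul_right, norm_smul, mul_pow,
    Real.norm_eq_abs, sq_abs]
  have : 0 ≤ θ / 2 * ((α / θ) ^ 2 * ‖r‖ ^ 2) := by positivity
  have hθα : θ / 2 * (2 * (α / θ * ⟪l' - ls, r⟫)) = α * ⟪l' - ls, r⟫ := by field_simp
  linarith

end OneStep

section Lyapunov

variable {E F : Type*} [NormedAddCommGroup E] [InnerProductSpace ℝ E] [CompleteSpace E]
  [NormedAddCommGroup F] [InnerProductSpace ℝ F] [CompleteSpace F]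

theorem lyapunov_step {X : Set E} {φ g : E → ℝ} {dφ : E → E} {A : E →L[ℝ] F} {b : F}
    {Lag : E → F → ℝ} (hLag : ∀ z l, Lag z l = φ z + g z + ⟪l, A z - b⟫)
    {μ L α γ θ γ' θ' : ℝ}
    (hlower : ∀ u ∈ X, ∀ w ∈ X, φ u + ⟪dφ u, w - u⟫ + μ / 2 * ‖w - u‖ ^ 2 ≤ φ w)
    (hupper : ∀ u ∈ X, ∀ w ∈ X, φ w ≤ φ u + ⟪dφ u, w - u⟫ + L / 2 * ‖w - u‖ ^ 2)
    (hg : ConvexOn ℝ X g) (hμ : 0 ≤ μ) (hα : 0 < α) (hγ : 0 ≤ γ) (hθ : 0 < θ)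
    (hstep : L * α ^ 2 ≤ γ) (hγ' : γ' = (γ + μ * α) / (1 + α)) (hθ' : θ' = θ / (1 + α))
    {x y v w x' v' xs : E} {l l' ls : F} (hx : x ∈ X) (hy : y ∈ X) (hx' : x' ∈ X)
    (hv' : v' ∈ X) (hxs : xs ∈ X) (hAxs : A xs = b)
    (hyv : (1 + α) • y = x + α • v) (hx'v' : (1 + α) • x' = x + α • v')
    (hw : (γ + μ * α) • w = γ • v + (μ * α) • y)
    (hmin : ∀ u ∈ X, g v' + ⟪adjoint A l' + dφ y, v'⟫ + (γ + μ * α) / (2 * α) * ‖v' - w‖ ^ 2 ≤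
      g u + ⟪adjoint A l' + dφ y, u⟫ + (γ + μ * α) / (2 * α) * ‖u - w‖ ^ 2)
    (hl' : l' = l + (α / θ) • (A v' - b)) :
    (1 + α) * (Lag x' ls - Lag xs l' + γ' / 2 * ‖v' - xs‖ ^ 2 + θ' / 2 * ‖l' - ls‖ ^ 2) ≤
      Lag x ls - Lag xs l + γ / 2 * ‖v - xs‖ ^ 2 + θ / 2 * ‖l - ls‖ ^ 2 := by
  have h1α : (1 + α) ≠ 0 := by linarith
  have hprimal := primal_step hlower hupper hg hμ hα hγ hstep hx hy hx' hv' hxs hyv hx'v'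
  have hprox := prox_step hg hμ hα hw hv' hmin hxs
  have hdual := dual_step (ls := ls) hθ hl'
  have hcoupling : ⟪adjoint A l' + dφ y, v' - xs⟫ = ⟪l', A v' - b⟫ + ⟪dφ y, v' - xs⟫ := by
    rw [inner_add_left, adjoint_inner_left, map_sub, hAxs]
  have hresidual : (1 + α) * ⟪ls, A x' - b⟫ = ⟪ls, A x - b⟫ + α * ⟪ls, A v' - b⟫ := by
    have := congrArg (⟪ls, ·⟫) (show (1 + α) • (A x' - b) = (A x - b) + α • (A v' - b) by
      rw [smul_sub, ← map_smul, hx'v', map_add, map_smul]; module)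
    simpa only [inner_add_right, real_inner_smul_right] using this
  have hγ'α : (1 + α) * (γ' / 2 * ‖v' - xs‖ ^ 2) = (γ + μ * α) / 2 * ‖v' - xs‖ ^ 2 := by
    rw [hγ']; field_simp
  have hθ'α : (1 + α) * (θ' / 2 * ‖l' - ls‖ ^ 2) = θ / 2 * ‖l' - ls‖ ^ 2 := by
    rw [hθ']; field_simp
  rw [hcoupling] at hprox
  rw [inner_sub_left] at hdual
  simp only [hLag, hAxs, sub_self, inner_zero_right, add_zero]
  linarith

end Lyapunov

theorem pos_of_succ_eq_div {a α : ℕ → ℝ} {c : ℝ} (hc : 0 ≤ c) (hα : ∀ k, 0 < α k)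
    (h0 : 0 < a 0) (hsucc : ∀ k, a (k + 1) = (a k + c * α k) / (1 + α k)) : ∀ k, 0 < a k := by
  intro k
  induction k with
  | zero => exact h0
  | succ k ih => rw [hsucc k]; have := hα k; positivity

theorem corrected_semi_implicit_contraction_general {n m : ℕ}
    (X : Set (EuclideanSpace ℝ (Fin n)))
    (hXcv : Convex ℝ X)
    (h g : EuclideanSpace ℝ (Fin n) → ℝ)
    (gradh : EuclideanSpace ℝ (Fin n) → EuclideanSpace ℝ (Fin n))
    (A : EuclideanSpace ℝ (Fin n) →L[ℝ] EuclideanSpace ℝ (Fin m))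
    (b : EuclideanSpace ℝ (Fin m))
    (μ L β μβ Lβc : ℝ)
    (hμ : 0 ≤ μ) (hβ : 0 ≤ β)
    (hμβ : μβ = μ + β * sigmaMin A ^ 2)
    (hLβc : Lβc = L + β * ‖A‖ ^ 2)
    (hgrad : ∀ z, HasGradientAt h (gradh z) z)
    (hhsc : ∀ u ∈ X, ∀ w ∈ X,
      h u + ⟪gradh u, w - u⟫ + μ / 2 * ‖w - u‖ ^ 2 ≤ h w)
    (hhlip : ∀ u ∈ X, ∀ w ∈ X, ⟪gradh u - gradh w, u - w⟫ ≤ L * ‖u - w‖ ^ 2)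
    (hgcv : ConvexOn ℝ Set.univ g)
    (Lβ : EuclideanSpace ℝ (Fin n) → EuclideanSpace ℝ (Fin m) → ℝ)
    (hLβ : ∀ z w, Lβ z w = h z + β / 2 * ‖A z - b‖ ^ 2 + g z + ⟪w, A z - b⟫)
    (xs : EuclideanSpace ℝ (Fin n)) (ls : EuclideanSpace ℝ (Fin m))
    (hxs : xs ∈ X) (hKKT1 : A xs = b)
    (θ γ α : ℕ → ℝ)
    (hα : ∀ k, 0 < α k) (hθ0 : θ 0 = 1) (hγ0 : 0 < γ 0)
    (hθ : ∀ k, θ (k + 1) = θ k / (1 + α k))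
    (hγ : ∀ k, γ (k + 1) = (γ k + μβ * α k) / (1 + α k))
    (hstep : ∀ k, Lβc * α k ^ 2 = γ k)
    (lam : ℕ → EuclideanSpace ℝ (Fin m))
    (x y v ws : ℕ → EuclideanSpace ℝ (Fin n))
    (hx0 : x 0 ∈ X) (hv0 : v 0 ∈ X)
    (hy : ∀ k, (1 + α k) • y k = x k + α k • v k)
    (hws : ∀ k, (γ k + μβ * α k) • ws k = γ k • v k + (μβ * α k) • y k)
    (hvmin : ∀ k, v (k + 1) ∈ X ∧ ∀ u ∈ X,
      g (v (k + 1)) +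
        ⟪(ContinuousLinearMap.adjoint A) (lam (k + 1)) + gradh (y k)
          + β • (ContinuousLinearMap.adjoint A) (A (y k) - b), v (k + 1)⟫ +
        (γ k + μβ * α k) / (2 * α k) * ‖v (k + 1) - ws k‖ ^ 2 ≤
      g u +
        ⟪(ContinuousLinearMap.adjoint A) (lam (k + 1)) + gradh (y k)
          + β • (ContinuousLinearMap.adjoint A) (A (y k) - b), u⟫ +
        (γ k + μβ * α k) / (2 * α k) * ‖u - ws k‖ ^ 2)
    (hx : ∀ k, (1 + α k) • x (k + 1) = x k + α k • v (k + 1))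
    (hlam : ∀ k, lam (k + 1) = lam k + (α k / θ k) • (A (v (k + 1)) - b))
    (Ef : ℕ → ℝ)
    (hEf : ∀ k, Ef k = Lβ (x k) ls - Lβ xs (lam k)
      + γ k / 2 * ‖v k - xs‖ ^ 2 + θ k / 2 * ‖lam k - ls‖ ^ 2) :
    (∀ k, x k ∈ X ∧ y k ∈ X ∧ v k ∈ X) ∧
      ∀ k, Ef (k + 1) - Ef k ≤ -(α k * Ef (k + 1)) := by
  have hμβ0 : 0 ≤ μβ := hμβ ▸ by positivity
  have hθpos := pos_of_succ_eq_div le_rfl hα (hθ0 ▸ one_pos) fun k => by rw [hθ k]; ring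
  have hγpos := pos_of_succ_eq_div hμβ0 hα hγ0 hγ
  have hmem := hXcv.iterates_mem (fun k => (hα k).le) hx0 hv0 (fun k => (hvmin k).1) hy hx
  refine ⟨hmem, fun k => ?_⟩
  have hlower : ∀ u ∈ X, ∀ w ∈ X, h u + β / 2 * ‖A u - b‖ ^ 2
      + ⟪gradh u + β • adjoint A (A u - b), w - u⟫ + μβ / 2 * ‖w - u‖ ^ 2
      ≤ h w + β / 2 * ‖A w - b‖ ^ 2 := fun u hu w hw =>
    hμβ ▸ lower_bound_add_penalty A b (sigmaMin_nonneg A) (sigmaMin_mul_norm_le A) hβ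
      (hhsc u hu w hw)
  have hupper : ∀ u ∈ X, ∀ w ∈ X, h w + β / 2 * ‖A w - b‖ ^ 2 ≤ h u + β / 2 * ‖A u - b‖ ^ 2
      + ⟪gradh u + β • adjoint A (A u - b), w - u⟫ + Lβc / 2 * ‖w - u‖ ^ 2 := fun u hu w hw =>
    hLβc ▸ upper_bound_add_penalty A b hβ
      (hXcv.le_add_inner_add_of_inner_gradient_sub_le (fun z _ => hgrad z) hhlip hu hw)
  have hcontract := lyapunov_step (ls := ls) hLβ hlower hupper
    (hgcv.subset (subset_univ X) hXcv) hμβ0 (hα k) (hγpos k).le (hθpos k) (hstep k).le (hγ k)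
    (hθ k) (hmem k).1 (hmem k).2.1 (hmem (k + 1)).1 (hmem (k + 1)).2.2 hxs hKKT1 (hy k) (hx k)
    (hws k) (by simpa only [add_assoc] using (hvmin k).2) (hlam k)
  rw [hEf, hEf]
  linarith

/-- Theorem 5.2 (contraction part): the corrected semi-implicit forward-backward scheme
(5.6) with step size `L_β α_k² = γ_k` keeps iterates in `X` and the Lyapunov function
contracts. -/
theorem corrected_semi_implicit_contraction {n m : ℕ}
    (X : Set (EuclideanSpace ℝ (Fin n)))
    (hXne : X.Nonempty) (hXcl : IsClosed X) (hXcv : Convex ℝ X)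
    (h g : EuclideanSpace ℝ (Fin n) → ℝ)
    (gradh : EuclideanSpace ℝ (Fin n) → EuclideanSpace ℝ (Fin n))
    (A : EuclideanSpace ℝ (Fin n) →L[ℝ] EuclideanSpace ℝ (Fin m))
    (b : EuclideanSpace ℝ (Fin m))
    (μ L β μβ Lβc : ℝ)
    (hμ : 0 ≤ μ) (hμL : μ ≤ L) (hβ : 0 ≤ β)
    (hμβ : μβ = μ + β * sigmaMin A ^ 2)
    (hLβc : Lβc = L + β * ‖A‖ ^ 2)
    (hgrad : ∀ z, HasGradientAt h (gradh z) z)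
    (hhsc : ∀ u ∈ X, ∀ w ∈ X,
      h u + ⟪gradh u, w - u⟫ + μ / 2 * ‖w - u‖ ^ 2 ≤ h w)
    (hhlip : ∀ u ∈ X, ∀ w ∈ X, ⟪gradh u - gradh w, u - w⟫ ≤ L * ‖u - w‖ ^ 2)
    (hgcv : ConvexOn ℝ Set.univ g)
    (Lβ : EuclideanSpace ℝ (Fin n) → EuclideanSpace ℝ (Fin m) → ℝ)
    (hLβ : ∀ z w, Lβ z w = h z + β / 2 * ‖A z - b‖ ^ 2 + g z + ⟪w, A z - b⟫)
    (xs : EuclideanSpace ℝ (Fin n)) (ls : EuclideanSpace ℝ (Fin m))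
    (hxs : xs ∈ X) (hKKT1 : A xs = b)
    (hKKT2 : ∃ p ∈ subdiff (fun z => h z + g z) xs, ∃ q ∈ normalCone X xs,
      p + q + (ContinuousLinearMap.adjoint A) ls = 0)
    (θ γ α : ℕ → ℝ)
    (hα : ∀ k, 0 < α k) (hθ0 : θ 0 = 1) (hγ0 : 0 < γ 0)
    (hθ : ∀ k, θ (k + 1) = θ k / (1 + α k))
    (hγ : ∀ k, γ (k + 1) = (γ k + μβ * α k) / (1 + α k))
    (hstep : ∀ k, Lβc * α k ^ 2 = γ k)
    (lam : ℕ → EuclideanSpace ℝ (Fin m))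
    (x y v ws : ℕ → EuclideanSpace ℝ (Fin n))
    (hx0 : x 0 ∈ X) (hv0 : v 0 ∈ X)
    (hy : ∀ k, (1 + α k) • y k = x k + α k • v k)
    (hws : ∀ k, (γ k + μβ * α k) • ws k = γ k • v k + (μβ * α k) • y k)
    (hvmin : ∀ k, v (k + 1) ∈ X ∧ ∀ u ∈ X,
      g (v (k + 1)) +
        ⟪(ContinuousLinearMap.adjoint A) (lam (k + 1)) + gradh (y k)
          + β • (ContinuousLinearMap.adjoint A) (A (y k) - b), v (k + 1)⟫ +
        (γ k + μβ * α k) / (2 * α k) * ‖v (k + 1) - ws k‖ ^ 2 ≤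
      g u +
        ⟪(ContinuousLinearMap.adjoint A) (lam (k + 1)) + gradh (y k)
          + β • (ContinuousLinearMap.adjoint A) (A (y k) - b), u⟫ +
        (γ k + μβ * α k) / (2 * α k) * ‖u - ws k‖ ^ 2)
    (hx : ∀ k, (1 + α k) • x (k + 1) = x k + α k • v (k + 1))
    (hlam : ∀ k, lam (k + 1) = lam k + (α k / θ k) • (A (v (k + 1)) - b))
    (Ef : ℕ → ℝ)
    (hEf : ∀ k, Ef k = Lβ (x k) ls - Lβ xs (lam k)
      + γ k / 2 * ‖v k - xs‖ ^ 2 + θ k / 2 * ‖lam k - ls‖ ^ 2) :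
    (∀ k, x k ∈ X ∧ y k ∈ X ∧ v k ∈ X) ∧
      ∀ k, Ef (k + 1) - Ef k ≤ -(α k * Ef (k + 1)) :=
  corrected_semi_implicit_contraction_general X hXcv h g gradh A b μ L β μβ Lβc hμ hβ hμβ hLβc hgrad
    hhsc hhlip hgcv Lβ hLβ xs ls hxs hKKT1 θ γ α hα hθ0 hγ0 hθ hγ hstep lam x y v ws hx0 hv0 hy hws
    hvmin hx hlam Ef hEf
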